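/- For t > 0, the characteristic function of the measure μ_t with density ρ_t(u) = t·exp(−(u−t)²/(2u))/√(2πu³) on (0,∞) is φ_t(x) = ∫_0^∞ e^{iux} ρ_t(u) du = exp(t − t√(1−2xi)), where the square root is the principal branch. -/

import Mathlib

/-!
For real `s < 1/2`, completing the square in the exponent turns `∫ e^{su} ρ_t(u) du` into a
multiple of `K(α, β) = ∫_0^∞ e^{-(α²u + β²/u)} u^{-3/2} du` with `α² = (1 - 2s)/2`, `β² = t²/2`.
The substitution `w = α√u - β/√u`, a bijection of `(0, ∞)` onto `ℝ`, turns the Gaussian integral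
`∫ e^{-w²} dw = √π` into `e^{2αβ} ∫ e^{-(α²u + β²/u)} (α u^{-1/2} + β u^{-3/2}) / 2 du`, and the
inversion `u ↦ β²/(α²u)` shows that the `u^{-1/2}` integral is `β/α` times the `u^{-3/2}` one.
Hence `K(α, β) = √π e^{-2αβ} / β`, and the Laplace transform equals `exp (t - t √(1 - 2s))`.
Both the Laplace transform and `z ↦ exp (t - t √(1 - 2z))` are holomorphic on `Re z < 1/2`, so
the identity theorem extends the equality from the real points to `z = ix`.
-/

open Real MeasureTheory Set Filter Topology

/-- The inverse Gaussian density with both parameters equal to `t`. -/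
noncomputable def ρ (t u : ℝ) : ℝ :=
  t * Real.exp (-(u - t) ^ 2 / (2 * u)) / Real.sqrt (2 * Real.pi * u ^ 3)

lemma hasDerivAt_mul_sqrt_sub_div_sqrt (α β : ℝ) {u : ℝ} (hu : 0 < u) :
    HasDerivAt (fun v => α * √v - β / √v) ((α + β / u) / (2 * √u)) u := by
  have hs := Real.hasDerivAt_sqrt hu.ne'
  have hsu := Real.sqrt_pos.2 hu
  refine ((hs.const_mul α).sub ((hasDerivAt_const u β).div hs hsu.ne')).congr_deriv ?_
  rw [sq_sqrt hu.le]
  field_simp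
  ring

lemma mul_sqrt_sub_div_sqrt_sq (α β : ℝ) {u : ℝ} (hu : 0 < u) :
    (α * √u - β / √u) ^ 2 = α ^ 2 * u + β ^ 2 / u - 2 * α * β := by
  have hsu := Real.sqrt_pos.2 hu
  field_simp
  rw [sq_sqrt hu.le]
  ring

lemma image_mul_sqrt_sub_div_sqrt {α β : ℝ} (hα : 0 < α) (hβ : 0 < β) :
    (fun u => α * √u - β / √u) '' Ioi 0 = univ := by
  refine eq_univ_of_forall fun w => ?_
  set D := √(w ^ 2 + 4 * α * β)
  have hD : D ^ 2 = w ^ 2 + 4 * α * β := sq_sqrt (by positivity)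
  have hwD : 0 < w + D := by
    nlinarith [abs_lt_of_sq_lt_sq' (show w ^ 2 < D ^ 2 by nlinarith) (sqrt_nonneg _)]
  -- the positive root of `α s² - w s - β`
  set s := (w + D) / (2 * α)
  have hs : 0 < s := by positivity
  refine ⟨s ^ 2, pow_pos hs 2, ?_⟩
  simp only [sqrt_sq hs.le]
  field_simp
  simp only [s]
  field_simp
  nlinarith [hD]

section ChangeOfVariables

variable {E : Type*} [NormedAddCommGroup E] [NormedSpace ℝ E] {α β : ℝ}

lemma integral_comp_div_Ioi (g : ℝ → E) {c : ℝ} (hc : 0 < c) :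
    ∫ u in Ioi 0, (c / u ^ 2) • g (c / u) = ∫ u in Ioi 0, g u := by
  have himage : (fun u => c / u) '' Ioi 0 = Ioi 0 := by
    ext v
    refine ⟨?_, fun hv => ⟨c / v, div_pos hc hv, div_div_cancel₀ hc.ne'⟩⟩
    rintro ⟨u, hu, rfl⟩
    exact div_pos hc hu
  have hderiv : ∀ u ∈ Ioi (0 : ℝ), HasDerivWithinAt (fun u => c / u) (-(c / u ^ 2)) (Ioi 0) u :=
    fun u hu => by
      simpa [div_eq_mul_inv] using ((hasDerivAt_inv (ne_of_gt hu)).const_mul c).hasDerivWithinAt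
  have hinj : InjOn (fun u => c / u) (Ioi 0) := fun u _ v _ h =>
    inv_injective (mul_left_cancel₀ hc.ne' h)
  have key := integral_image_eq_integral_abs_deriv_smul measurableSet_Ioi hderiv hinj g
  rw [himage] at key
  rw [key]
  refine setIntegral_congr_fun measurableSet_Ioi fun u hu => ?_
  rw [abs_neg, abs_of_pos (div_pos hc (pow_pos hu 2))]

lemma strictMonoOn_mul_sqrt_sub_div_sqrt (hα : 0 < α) (hβ : 0 ≤ β) :
    StrictMonoOn (fun u => α * √u - β / √u) (Ioi 0) := by
  have hderiv u (hu : u ∈ Ioi (0 : ℝ)) := hasDerivAt_mul_sqrt_sub_div_sqrt α β hu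
  refine strictMonoOn_of_hasDerivWithinAt_pos (f' := fun u => (α + β / u) / (2 * √u)) (convex_Ioi 0)
    (fun u hu => (hderiv u hu).continuousAt.continuousWithinAt) (fun u hu => ?_) (fun u hu => ?_)
  all_goals simp only [interior_Ioi] at hu ⊢
  · exact (hderiv u hu).hasDerivWithinAt
  · have : 0 < u := hu
    positivity

lemma integral_comp_mul_sqrt_sub_div_sqrt (hα : 0 < α) (hβ : 0 < β) (g : ℝ → E) :
    ∫ u in Ioi 0, ((α + β / u) / (2 * √u)) • g (α * √u - β / √u) = ∫ w, g w := by
  have key := integral_image_eq_integral_abs_deriv_smul measurableSet_Ioi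
    (fun u hu => (hasDerivAt_mul_sqrt_sub_div_sqrt α β hu).hasDerivWithinAt)
    (strictMonoOn_mul_sqrt_sub_div_sqrt hα hβ.le).injOn g
  rw [image_mul_sqrt_sub_div_sqrt hα hβ, setIntegral_univ] at key
  rw [key]
  refine setIntegral_congr_fun measurableSet_Ioi fun u (hu : 0 < u) => ?_
  rw [abs_of_pos (by positivity)]

lemma integrableOn_comp_mul_sqrt_sub_div_sqrt_iff (hα : 0 < α) (hβ : 0 < β) (g : ℝ → E) :
    IntegrableOn (fun u => ((α + β / u) / (2 * √u)) • g (α * √u - β / √u)) (Ioi 0) ↔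
      Integrable g := by
  have key := integrableOn_image_iff_integrableOn_abs_deriv_smul measurableSet_Ioi
    (fun u hu => (hasDerivAt_mul_sqrt_sub_div_sqrt α β hu).hasDerivWithinAt)
    (strictMonoOn_mul_sqrt_sub_div_sqrt hα hβ.le).injOn g
  rw [image_mul_sqrt_sub_div_sqrt hα hβ, integrableOn_univ] at key
  rw [key]
  refine integrableOn_congr_fun (fun u (hu : 0 < u) => ?_) measurableSet_Ioi
  rw [abs_of_pos (by positivity)]

end ChangeOfVariables

section InverseGaussianIntegral

variable {α β : ℝ}

lemma exp_neg_add_div_eq (α β : ℝ) {u : ℝ} (hu : 0 < u) :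
    Real.exp (-(α ^ 2 * u + β ^ 2 / u)) =
      Real.exp (-(α * √u - β / √u) ^ 2) * Real.exp (-(2 * α * β)) := by
  rw [mul_sqrt_sub_div_sqrt_sq α β hu, ← Real.exp_add]
  ring_nf

lemma integrableOn_exp_neg_add_div_mul (hα : 0 < α) (hβ : 0 < β) :
    IntegrableOn (fun u => Real.exp (-(α ^ 2 * u + β ^ 2 / u)) * ((α + β / u) / (2 * √u)))
      (Ioi 0) := by
  have h := ((integrableOn_comp_mul_sqrt_sub_div_sqrt_iff hα hβ _).2
    (integrable_exp_neg_mul_sq one_pos)).mul_const (Real.exp (-(2 * α * β)))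
  refine IntegrableOn.congr_fun h (fun u (hu : 0 < u) => ?_) measurableSet_Ioi
  rw [smul_eq_mul, neg_one_mul, exp_neg_add_div_eq α β hu]
  ring

lemma integral_exp_neg_add_div_mul (hα : 0 < α) (hβ : 0 < β) :
    ∫ u in Ioi 0, Real.exp (-(α ^ 2 * u + β ^ 2 / u)) * ((α + β / u) / (2 * √u)) =
      √π * Real.exp (-(2 * α * β)) := by
  have h := integral_comp_mul_sqrt_sub_div_sqrt hα hβ (fun w => Real.exp (-1 * w ^ 2))
  rw [integral_gaussian, div_one] at h
  rw [← h, ← integral_mul_const]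
  refine setIntegral_congr_fun measurableSet_Ioi fun u (hu : 0 < u) => ?_
  rw [smul_eq_mul, neg_one_mul, exp_neg_add_div_eq α β hu]
  ring

lemma integrableOn_exp_neg_add_div_div_sqrt (hα : 0 < α) (hβ : 0 < β) :
    IntegrableOn (fun u => Real.exp (-(α ^ 2 * u + β ^ 2 / u)) / √u) (Ioi 0) := by
  refine ((integrableOn_exp_neg_add_div_mul hα hβ).const_mul (2 / α)).mono'
    (by fun_prop : Measurable _).aestronglyMeasurable ?_
  refine (ae_restrict_iff' measurableSet_Ioi).2 (ae_of_all _ fun u (hu : 0 < u) => ?_)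
  rw [Real.norm_of_nonneg (by positivity)]
  calc Real.exp (-(α ^ 2 * u + β ^ 2 / u)) / √u
      = 2 / α * (Real.exp (-(α ^ 2 * u + β ^ 2 / u)) * ((α + 0) / (2 * √u))) := by
        field_simp; ring
    _ ≤ _ := by gcongr; positivity

lemma integrableOn_exp_neg_add_div_div_mul_sqrt (hα : 0 < α) (hβ : 0 < β) :
    IntegrableOn (fun u => Real.exp (-(α ^ 2 * u + β ^ 2 / u)) / (u * √u)) (Ioi 0) := by
  refine ((integrableOn_exp_neg_add_div_mul hα hβ).const_mul (2 / β)).mono'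
    (by fun_prop : Measurable _).aestronglyMeasurable ?_
  refine (ae_restrict_iff' measurableSet_Ioi).2 (ae_of_all _ fun u (hu : 0 < u) => ?_)
  rw [Real.norm_of_nonneg (by positivity)]
  calc Real.exp (-(α ^ 2 * u + β ^ 2 / u)) / (u * √u)
      = 2 / β * (Real.exp (-(α ^ 2 * u + β ^ 2 / u)) * ((0 + β / u) / (2 * √u))) := by
        field_simp; ring
    _ ≤ _ := by gcongr

lemma integral_exp_neg_add_div_div_sqrt (hα : 0 < α) (hβ : 0 < β) :
    ∫ u in Ioi 0, Real.exp (-(α ^ 2 * u + β ^ 2 / u)) / √u =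
      β / α * ∫ u in Ioi 0, Real.exp (-(α ^ 2 * u + β ^ 2 / u)) / (u * √u) := by
  rw [← integral_comp_div_Ioi _ (by positivity : 0 < (β / α) ^ 2), ← integral_const_mul]
  refine setIntegral_congr_fun measurableSet_Ioi fun u (hu : 0 < u) => ?_
  rw [smul_eq_mul]
  have hsqrt : √((β / α) ^ 2 / u) = β / α / √u := by
    rw [sqrt_div' _ hu.le, sqrt_sq (by positivity)]
  have harg : α ^ 2 * ((β / α) ^ 2 / u) + β ^ 2 / ((β / α) ^ 2 / u) = α ^ 2 * u + β ^ 2 / u := by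
    field_simp
    ring
  rw [hsqrt, harg, add_comm (α ^ 2 * u)]
  have := Real.sqrt_pos.2 hu
  field_simp
  rw [sq_sqrt hu.le]

lemma integral_exp_neg_add_div_div_mul_sqrt (hα : 0 < α) (hβ : 0 < β) :
    ∫ u in Ioi 0, Real.exp (-(α ^ 2 * u + β ^ 2 / u)) / (u * √u) =
      √π / β * Real.exp (-(2 * α * β)) := by
  have hsum : ∫ u in Ioi 0, Real.exp (-(α ^ 2 * u + β ^ 2 / u)) * ((α + β / u) / (2 * √u)) =
      α / 2 * (∫ u in Ioi 0, Real.exp (-(α ^ 2 * u + β ^ 2 / u)) / √u) +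
        β / 2 * ∫ u in Ioi 0, Real.exp (-(α ^ 2 * u + β ^ 2 / u)) / (u * √u) := by
    rw [← integral_const_mul, ← integral_const_mul, ← integral_add
      ((integrableOn_exp_neg_add_div_div_sqrt hα hβ).const_mul _)
      ((integrableOn_exp_neg_add_div_div_mul_sqrt hα hβ).const_mul _)]
    refine setIntegral_congr_fun measurableSet_Ioi fun u (hu : 0 < u) => ?_
    field_simp
  have h := integral_exp_neg_add_div_mul hα hβ
  rw [hsum, integral_exp_neg_add_div_div_sqrt hα hβ] at h
  rw [div_mul_eq_mul_div, eq_div_iff hβ.ne', ← h]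
  field_simp
  ring

end InverseGaussianIntegral

section LaplaceTransform

variable {μ : Measure ℝ} {f : ℝ → ℂ} {c : ℝ}

lemma norm_cexp_ofReal_mul_mul (u : ℝ) (z w : ℂ) :
    ‖Complex.exp (u * z) * w‖ = Real.exp (z.re * u) * ‖w‖ := by
  rw [norm_mul, Complex.norm_exp, Complex.re_ofReal_mul, mul_comm u]

lemma differentiableAt_integral_cexp_mul
    (hf : AEStronglyMeasurable f (μ.restrict (Ioi 0)))
    (hint : ∀ σ < c, IntegrableOn (fun u => Real.exp (σ * u) * ‖f u‖) (Ioi 0) μ)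
    (hint' : ∀ σ < c, IntegrableOn (fun u => u * (Real.exp (σ * u) * ‖f u‖)) (Ioi 0) μ)
    {z₀ : ℂ} (hz₀ : z₀.re < c) :
    DifferentiableAt ℂ (fun z => ∫ u in Ioi 0, Complex.exp (u * z) * f u ∂μ) z₀ := by
  set ε := (c - z₀.re) / 2
  have hε : 0 < ε := by simp only [ε]; linarith
  have hmeas (z : ℂ) : AEStronglyMeasurable (fun u : ℝ => Complex.exp (u * z) * f u)
      (μ.restrict (Ioi 0)) :=
    (by fun_prop : Continuous fun u : ℝ => Complex.exp (u * z)).aestronglyMeasurable.mul hf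
  have hball {z : ℂ} (hz : z ∈ Metric.ball z₀ ε) : z.re ≤ z₀.re + ε := by
    have := (Complex.abs_re_le_norm (z - z₀)).trans (mem_ball_iff_norm.1 hz).le
    rw [Complex.sub_re] at this
    linarith [le_abs_self (z.re - z₀.re)]
  refine (hasDerivAt_integral_of_dominated_loc_of_deriv_le (Metric.ball_mem_nhds z₀ hε)
    (F' := fun z u => u * (Complex.exp (u * z) * f u))
    (bound := fun u => u * (Real.exp ((z₀.re + ε) * u) * ‖f u‖))
    (Eventually.of_forall hmeas) ?_ (Complex.continuous_ofReal.aestronglyMeasurable.mul (hmeas z₀))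
    ?_ (hint' _ (by simp only [ε]; linarith)) ?_).2.differentiableAt
  · refine (hint _ hz₀).mono' (hmeas z₀) (ae_of_all _ fun u => ?_)
    rw [norm_cexp_ofReal_mul_mul]
  · refine (ae_restrict_iff' measurableSet_Ioi).2 (ae_of_all _ fun u (hu : 0 < u) z hz => ?_)
    rw [norm_mul, norm_cexp_ofReal_mul_mul, Complex.norm_real, Real.norm_of_nonneg hu.le]
    gcongr
    exact hball hz
  · refine ae_of_all _ fun u z _ => ?_
    exact (((hasDerivAt_id z).const_mul (u : ℂ)).cexp.mul_const (f u)).congr_deriv (by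
      simp only [id, mul_one]; ring)

end LaplaceTransform

lemma eqOn_re_lt_of_forall_ofReal_eq {f g : ℂ → ℂ} {c : ℝ}
    (hf : DifferentiableOn ℂ f {z | z.re < c}) (hg : DifferentiableOn ℂ g {z | z.re < c})
    (hfg : ∀ s : ℝ, s < c → f s = g s) : EqOn f g {z | z.re < c} := by
  have hU : IsOpen {z : ℂ | z.re < c} := isOpen_lt Complex.continuous_re continuous_const
  have hreal : ∀ᶠ s : ℝ in 𝓝[≠] (c - 1), f s = g s :=
    eventually_nhdsWithin_of_eventually_nhds
      ((eventually_lt_nhds (by linarith : c - 1 < c)).mono hfg)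
  have hofReal : Tendsto ((↑) : ℝ → ℂ) (𝓝[≠] (c - 1)) (𝓝[≠] (Complex.ofReal (c - 1))) :=
    Complex.continuous_ofReal.continuousWithinAt.tendsto_nhdsWithin
      fun _ h ↦ Complex.ofReal_injective.ne h
  exact (hf.analyticOnNhd hU).eqOn_of_preconnected_of_frequently_eq (hg.analyticOnNhd hU)
    (convex_halfSpace_re_lt c).isPreconnected (by simp)
    (hofReal.frequently hreal.frequently)

lemma differentiableOn_cexp_sub_mul_cpow (t : ℂ) :
    DifferentiableOn ℂ (fun z => Complex.exp (t - t * (1 - 2 * z) ^ ((1 : ℂ) / 2)))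
      {z | z.re < 1 / 2} := by
  intro z (hz : z.re < 1 / 2)
  have hslit : 1 - 2 * z ∈ Complex.slitPlane := by
    refine Complex.mem_slitPlane_iff.2 (Or.inl ?_)
    simp only [Complex.sub_re, Complex.one_re, Complex.mul_re, Complex.re_ofNat, Complex.im_ofNat,
      zero_mul, sub_zero]
    linarith
  exact (((differentiableAt_const _).sub ((differentiableAt_const _).mul
    ((by fun_prop : DifferentiableAt ℂ (fun z : ℂ => 1 - 2 * z) z).cpow
      (differentiableAt_const _) hslit))).cexp).differentiableWithinAt

section InverseGaussianDensity

variable {t s : ℝ}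

lemma rho_nonneg (ht : 0 ≤ t) (u : ℝ) : 0 ≤ ρ t u := by
  unfold ρ; positivity

lemma measurable_rho (t : ℝ) : Measurable (ρ t) := by
  unfold ρ; fun_prop

lemma exp_mul_mul_rho (t : ℝ) (hs : s ≤ 1 / 2) {u : ℝ} (hu : 0 < u) :
    Real.exp (s * u) * ρ t u = t * Real.exp t / √(2 * π) *
      (Real.exp (-(√((1 - 2 * s) / 2) ^ 2 * u + (t / √2) ^ 2 / u)) / (u * √u)) := by
  have hsqrt : √(2 * π * u ^ 3) = √(2 * π) * (u * √u) := by
    rw [sqrt_mul (by positivity), show u ^ 3 = u ^ 2 * u by ring, sqrt_mul (sq_nonneg u),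
      sqrt_sq hu.le]
  have hexp : Real.exp (s * u) * Real.exp (-(u - t) ^ 2 / (2 * u)) =
      Real.exp t * Real.exp (-((1 - 2 * s) / 2 * u + t ^ 2 / 2 / u)) := by
    rw [← Real.exp_add, ← Real.exp_add]
    congr 1
    field_simp
    ring
  rw [sq_sqrt (by linarith), div_pow, sq_sqrt zero_le_two, ρ, hsqrt]
  calc _ = t / √(2 * π) * (Real.exp (s * u) * Real.exp (-(u - t) ^ 2 / (2 * u))) / (u * √u) := by
        ring
    _ = _ := by rw [hexp]; ring

lemma integrableOn_exp_mul_mul_rho (ht : 0 < t) (hs : s < 1 / 2) :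
    IntegrableOn (fun u => Real.exp (s * u) * ρ t u) (Ioi 0) := by
  have hα : 0 < √((1 - 2 * s) / 2) := sqrt_pos.2 (by linarith)
  have hβ : 0 < t / √2 := by positivity
  refine IntegrableOn.congr_fun
    ((integrableOn_exp_neg_add_div_div_mul_sqrt hα hβ).const_mul _)
    (fun u (hu : 0 < u) => (exp_mul_mul_rho t hs.le hu).symm) measurableSet_Ioi

lemma integrableOn_mul_exp_mul_mul_rho (ht : 0 < t) (hs : s < 1 / 2) :
    IntegrableOn (fun u => u * (Real.exp (s * u) * ρ t u)) (Ioi 0) := by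
  have hα : 0 < √((1 - 2 * s) / 2) := sqrt_pos.2 (by linarith)
  have hβ : 0 < t / √2 := by positivity
  refine IntegrableOn.congr_fun
    ((integrableOn_exp_neg_add_div_div_sqrt hα hβ).const_mul (t * Real.exp t / √(2 * π)))
    (fun u (hu : 0 < u) => ?_) measurableSet_Ioi
  rw [exp_mul_mul_rho t hs.le hu]
  field_simp

lemma integral_exp_mul_mul_rho (ht : 0 < t) (hs : s < 1 / 2) :
    ∫ u in Ioi 0, Real.exp (s * u) * ρ t u = Real.exp (t - t * √(1 - 2 * s)) := by
  have hα : 0 < √((1 - 2 * s) / 2) := sqrt_pos.2 (by linarith)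
  have hβ : 0 < t / √2 := by positivity
  rw [setIntegral_congr_fun measurableSet_Ioi fun u (hu : 0 < u) => exp_mul_mul_rho t hs.le hu,
    integral_const_mul, integral_exp_neg_add_div_div_mul_sqrt hα hβ]
  have hroot : 2 * √((1 - 2 * s) / 2) * (t / √2) = t * √(1 - 2 * s) := by
    rw [sqrt_div' _ zero_le_two]
    field_simp
    rw [sq_sqrt zero_le_two, mul_comm]
  rw [hroot, sqrt_mul' _ pi_pos.le, sub_eq_add_neg _ (t * _), Real.exp_add]
  field_simp

lemma integral_cexp_mul_mul_rho (ht : 0 < t) (hs : s < 1 / 2) :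
    ∫ u in Ioi (0 : ℝ), Complex.exp (u * s) * (ρ t u : ℂ) =
      Complex.exp (t - t * (1 - 2 * s) ^ ((1 : ℂ) / 2)) := by
  have hcast (u : ℝ) :
      Complex.exp (u * s) * (ρ t u : ℂ) = ((Real.exp (s * u) * ρ t u : ℝ) : ℂ) := by
    push_cast
    ring_nf
  have hroot : ((1 : ℂ) - 2 * s) ^ ((1 : ℂ) / 2) = (√(1 - 2 * s) : ℝ) := by
    rw [sqrt_eq_rpow, Complex.ofReal_cpow (by linarith)]
    push_cast
    ring_nf
  simp_rw [hcast]
  rw [integral_complex_ofReal, integral_exp_mul_mul_rho ht hs, hroot]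
  push_cast
  ring_nf

lemma differentiableOn_integral_cexp_mul_mul_rho (ht : 0 < t) :
    DifferentiableOn ℂ (fun z => ∫ u in Ioi (0 : ℝ), Complex.exp (u * z) * (ρ t u : ℂ))
      {z | z.re < 1 / 2} := by
  have hnorm (u : ℝ) : ‖(ρ t u : ℂ)‖ = ρ t u := by
    rw [Complex.norm_real, Real.norm_of_nonneg (rho_nonneg ht.le u)]
  refine fun z hz => (differentiableAt_integral_cexp_mul (f := fun u => (ρ t u : ℂ))
    (Complex.measurable_ofReal.comp (measurable_rho t)).aestronglyMeasurable
    (fun σ hσ => ?_) (fun σ hσ => ?_) hz).differentiableWithinAt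
  · simpa only [hnorm] using integrableOn_exp_mul_mul_rho ht hσ
  · simpa only [hnorm] using integrableOn_mul_exp_mul_mul_rho ht hσ

end InverseGaussianDensity

theorem stmt_15 (t : ℝ) (ht : 0 < t) (x : ℝ) :
    ∫ u in Set.Ioi (0 : ℝ), Complex.exp (u * x * Complex.I) * (ρ t u : ℂ)
      = Complex.exp (t - t * (1 - 2 * x * Complex.I) ^ ((1 : ℂ) / 2)) := by
  have h := eqOn_re_lt_of_forall_ofReal_eq (differentiableOn_integral_cexp_mul_mul_rho ht)
    (differentiableOn_cexp_sub_mul_cpow t) (fun s hs => integral_cexp_mul_mul_rho ht hs)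
    (show (x * Complex.I).re < 1 / 2 by simp)
  simpa only [mul_assoc] using h
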